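/- Let q : ℕ×ℕ → ℝ be a symmetric solution of the Dirichlet problem with 0 ≤ q(i,j) ≤ 1 for all i,j. Then the double power series P(x,y) = Σ_{i,j ≥ 1} q(i,j)·x^i·y^j converges absolutely for (x,y) ∈ (0,1)², and for all (x,y) ∈ (0,1)² it satisfies the partial differential equation Q(x,y)·∂P/∂x(x,y) + Q(y,x)·∂P/∂y(x,y) + R(x,y)·P(x,y) = −(r/2)·(Σ_{i≥1} i·q(i,1)·x^i + Σ_{j≥1} j·q(1,j)·y^j) + d·x·y·(1/(1−x) + 1/(1−y)), where Q(x,y) = (r+d)x − r/2 − (r/2)(x/y) − d·x² and R(x,y) = r/(2x) + r/(2y) − d·x − d·y. -/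

import Mathlib

/-- The coefficient `Q(x,y) = (r+d)x − r/2 − (r/2)(x/y) − d·x²`. -/
noncomputable def Qfun (r d x y : ℝ) : ℝ :=
  (r + d) * x - r / 2 - r / 2 * (x / y) - d * x ^ 2

/-- The coefficient `R(x,y) = r/(2x) + r/(2y) − d·x − d·y`. -/
noncomputable def Rfun (r d x y : ℝ) : ℝ :=
  r / (2 * x) + r / (2 * y) - d * x - d * y

/-- The generating function `P(x,y) = Σ_{i,j ≥ 1} q(i,j)·x^i·y^j`. -/
noncomputable def genFun (q : ℕ × ℕ → ℝ) (x y : ℝ) : ℝ :=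
  ∑' p : ℕ × ℕ, q (p.1 + 1, p.2 + 1) * x ^ (p.1 + 1) * y ^ (p.2 + 1)

/-!
Multiply the recurrence at `(i+1, j+1)` by `(i+j+2) x^(i+1) y^(j+1)` and sum over `ℕ × ℕ`.
The factor `i+j` turns the left side into the Euler operator `x∂ₓP + y∂ᵧP`. The terms in
`q(i-1,j)` and `q(i,j-1)` give `x²∂ₓP + xP` and `y²∂ᵧP + yP`, plus `xy/(1-y)` and `xy/(1-x)`
from the boundary values `q(0,j) = q(i,0) = 1`. The terms in `q(i,j+1)` and `q(i+1,j)` give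
`(x∂ₓP + y∂ᵧP - P)/y` and `(x∂ₓP + y∂ᵧP - P)/x`, minus the edge series `Σ i q(i,1) xⁱ` and
`Σ j q(1,j) yʲ`. Since `|q| ≤ 1`, every series involved is dominated by `Σ (i+1) |x|ⁱ |y|ʲ`, which
justifies the rearrangements and the termwise differentiation of `P`.
-/

open Set

theorem hasSum_of_fst_zero_of_fst_succ {E : Type*} [AddCommMonoid E] [TopologicalSpace E]
    [ContinuousAdd E] {f : ℕ × ℕ → E} {a b : E} (h₀ : HasSum (fun j => f (0, j)) a)
    (h₁ : HasSum (fun p : ℕ × ℕ => f (p.1 + 1, p.2)) b) : HasSum f (a + b) := by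
  have i₀ : Function.Injective fun j : ℕ => ((0, j) : ℕ × ℕ) := fun _ _ h => (Prod.mk.inj h).2
  have i₁ : Function.Injective fun p : ℕ × ℕ => (p.1 + 1, p.2) := fun _ _ h => by
    simpa [Prod.ext_iff] using h
  refine (i₀.hasSum_range_iff.2 h₀).add_isCompl ?_ (i₁.hasSum_range_iff.2 h₁)
  have : range (fun p : ℕ × ℕ => (p.1 + 1, p.2)) = (range fun j : ℕ => ((0, j) : ℕ × ℕ))ᶜ := by
    ext ⟨_ | i, j⟩ <;> simp
  exact this ▸ isCompl_compl

theorem hasSum_of_snd_zero_of_snd_succ {E : Type*} [AddCommMonoid E] [TopologicalSpace E]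
    [ContinuousAdd E] {f : ℕ × ℕ → E} {a b : E} (h₀ : HasSum (fun i => f (i, 0)) a)
    (h₁ : HasSum (fun p : ℕ × ℕ => f (p.1, p.2 + 1)) b) : HasSum f (a + b) := by
  rw [← (Equiv.prodComm ℕ ℕ).hasSum_iff] at h₁ ⊢
  exact hasSum_of_fst_zero_of_fst_succ h₀ h₁

theorem hasSum_fst_succ_of_fst_zero {E : Type*} [NormedAddCommGroup E] [CompleteSpace E]
    {f : ℕ × ℕ → E} {a b : E} (hf : HasSum f a) (h₀ : HasSum (fun j => f (0, j)) b) :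
    HasSum (fun p : ℕ × ℕ => f (p.1 + 1, p.2)) (a - b) := by
  obtain ⟨c, hc⟩ : Summable fun p : ℕ × ℕ => f (p.1 + 1, p.2) :=
    hf.summable.comp_injective fun _ _ h => by simpa [Prod.ext_iff] using h
  rwa [hf.unique (hasSum_of_fst_zero_of_fst_succ h₀ hc), add_sub_cancel_left]

theorem hasSum_snd_succ_of_snd_zero {E : Type*} [NormedAddCommGroup E] [CompleteSpace E]
    {f : ℕ × ℕ → E} {a b : E} (hf : HasSum f a) (h₀ : HasSum (fun i => f (i, 0)) b) :
    HasSum (fun p : ℕ × ℕ => f (p.1, p.2 + 1)) (a - b) := by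
  have hf' : HasSum (f ∘ Prod.swap) a := (Equiv.prodComm ℕ ℕ).hasSum_iff.2 hf
  exact (Equiv.prodComm ℕ ℕ).hasSum_iff.1 (hasSum_fst_succ_of_fst_zero hf' h₀)

theorem hasDerivAt_tsum_mul_pow {ι : Type*} {a : ι → ℝ} {n : ι → ℕ} {x b : ℝ} (hx : |x| < b)
    (hu : Summable fun i => |a i| * n i * b ^ (n i - 1)) (hs : Summable fun i => a i * x ^ n i) :
    HasDerivAt (fun t => ∑' i, a i * t ^ n i) (∑' i, a i * n i * x ^ (n i - 1)) x := by
  have hxb : x ∈ Ioo (-b) b := abs_lt.1 hx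
  refine hasDerivAt_tsum_of_isPreconnected (g := fun i t => a i * t ^ n i)
    (g' := fun i t => a i * n i * t ^ (n i - 1)) hu isOpen_Ioo isPreconnected_Ioo
    (fun i t _ => ?_) (fun i t ht => ?_) hxb hs hxb
  · simpa [mul_assoc] using (hasDerivAt_pow (n i) t).const_mul (a i)
  · rw [Real.norm_eq_abs, abs_mul, abs_mul, abs_pow, Nat.abs_cast]
    gcongr
    exact (abs_lt.2 ht).le

theorem summable_succ_mul_pow_mul_pow {x y : ℝ} (hx₀ : 0 ≤ x) (hx : x < 1) (hy₀ : 0 ≤ y)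
    (hy : y < 1) : Summable fun p : ℕ × ℕ => ((p.1 : ℝ) + 1) * x ^ p.1 * y ^ p.2 := by
  have hx' : ‖x‖ < 1 := by rwa [Real.norm_of_nonneg hx₀]
  have h₁ : Summable fun n : ℕ => ((n : ℝ) + 1) * x ^ n := by
    simpa [add_mul] using ((summable_pow_mul_geometric_of_norm_lt_one 1 hx').add
      (summable_geometric_of_lt_one hx₀ hx))
  exact h₁.mul_of_nonneg (summable_geometric_of_lt_one hy₀ hy) (fun _ => by positivity)
    fun _ => by positivity

noncomputable def genFunDx (q : ℕ × ℕ → ℝ) (x y : ℝ) : ℝ :=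
  ∑' p : ℕ × ℕ, ((p.1 : ℝ) + 1) * q (p.1 + 1, p.2 + 1) * x ^ p.1 * y ^ (p.2 + 1)

noncomputable def genFunDy (q : ℕ × ℕ → ℝ) (x y : ℝ) : ℝ :=
  ∑' p : ℕ × ℕ, ((p.2 : ℝ) + 1) * q (p.1 + 1, p.2 + 1) * x ^ (p.1 + 1) * y ^ p.2

section GenFun

variable {q : ℕ × ℕ → ℝ} {x y : ℝ}

theorem summable_genFunDx_terms (hq : ∀ p, |q p| ≤ 1) (hx : |x| < 1) (hy : |y| < 1) :
    Summable fun p : ℕ × ℕ => ((p.1 : ℝ) + 1) * q (p.1 + 1, p.2 + 1) * x ^ p.1 * y ^ (p.2 + 1) := by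
  refine (summable_succ_mul_pow_mul_pow (abs_nonneg x) hx (abs_nonneg y) hy).of_norm_bounded
    fun p => ?_
  have hy' : |y| ^ (p.2 + 1) ≤ |y| ^ p.2 := pow_le_pow_of_le_one (abs_nonneg y) hy.le p.2.le_succ
  rw [Real.norm_eq_abs, abs_mul, abs_mul, abs_mul, abs_pow, abs_pow, abs_of_nonneg (by positivity)]
  calc ((p.1 : ℝ) + 1) * |q (p.1 + 1, p.2 + 1)| * |x| ^ p.1 * |y| ^ (p.2 + 1)
      ≤ ((p.1 : ℝ) + 1) * 1 * |x| ^ p.1 * |y| ^ p.2 := by gcongr (_ + 1) * ?_ * _ * ?_; exact hq _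
    _ = _ := by ring

theorem summable_genFunDy_terms (hq : ∀ p, |q p| ≤ 1) (hx : |x| < 1) (hy : |y| < 1) :
    Summable fun p : ℕ × ℕ => ((p.2 : ℝ) + 1) * q (p.1 + 1, p.2 + 1) * x ^ (p.1 + 1) * y ^ p.2 := by
  have := (summable_genFunDx_terms (q := fun p => q p.swap) (fun p => hq p.swap) hy hx).prod_symm
  convert this using 2 with p
  simp only [Prod.fst_swap, Prod.snd_swap, Prod.swap_prod_mk]
  ring

theorem summable_genFun_terms (hq : ∀ p, |q p| ≤ 1) (hx : |x| < 1) (hy : |y| < 1) :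
    Summable fun p : ℕ × ℕ => q (p.1 + 1, p.2 + 1) * x ^ (p.1 + 1) * y ^ (p.2 + 1) := by
  refine (summable_succ_mul_pow_mul_pow (abs_nonneg x) hx (abs_nonneg y) hy).of_norm_bounded
    fun p => ?_
  have hx' : |x| ^ (p.1 + 1) ≤ |x| ^ p.1 := pow_le_pow_of_le_one (abs_nonneg x) hx.le p.1.le_succ
  have hy' : |y| ^ (p.2 + 1) ≤ |y| ^ p.2 := pow_le_pow_of_le_one (abs_nonneg y) hy.le p.2.le_succ
  have h₁ : (1 : ℝ) ≤ p.1 + 1 := by simp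
  rw [Real.norm_eq_abs, abs_mul, abs_mul, abs_pow, abs_pow]
  calc |q (p.1 + 1, p.2 + 1)| * |x| ^ (p.1 + 1) * |y| ^ (p.2 + 1)
      ≤ 1 * |x| ^ p.1 * |y| ^ p.2 := by gcongr; exact hq _
    _ ≤ ((p.1 : ℝ) + 1) * |x| ^ p.1 * |y| ^ p.2 := by gcongr

theorem hasDerivAt_genFun_fst (hq : ∀ p, |q p| ≤ 1) (hx : |x| < 1) (hy : |y| < 1) :
    HasDerivAt (fun t => genFun q t y) (genFunDx q x y) x := by
  have hb : |(|x| + 1) / 2| < 1 := by rw [abs_of_pos (by positivity)]; linarith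
  have hxb : |x| < (|x| + 1) / 2 := by linarith
  have key := hasDerivAt_tsum_mul_pow (a := fun p : ℕ × ℕ => q (p.1 + 1, p.2 + 1) * y ^ (p.2 + 1))
    (n := fun p => p.1 + 1) hxb
    ((summable_genFunDx_terms (q := fun p => |q p|) (y := |y|) (by simpa using hq) hb
      (by simpa using hy)).congr fun p => by
      simp only [abs_mul, abs_pow, Nat.cast_add, Nat.cast_one, Nat.add_sub_cancel]; ring)
    ((summable_genFun_terms hq hx hy).congr fun p => by ring)
  convert key using 1
  · funext t
    exact tsum_congr fun p => by ring
  · refine tsum_congr fun p => ?_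
    simp only [Nat.cast_add, Nat.cast_one, Nat.add_sub_cancel]
    ring

theorem hasDerivAt_genFun_snd (hq : ∀ p, |q p| ≤ 1) (hx : |x| < 1) (hy : |y| < 1) :
    HasDerivAt (fun t => genFun q x t) (genFunDy q x y) y := by
  have hb : |(|y| + 1) / 2| < 1 := by rw [abs_of_pos (by positivity)]; linarith
  have hyb : |y| < (|y| + 1) / 2 := by linarith
  have key := hasDerivAt_tsum_mul_pow (a := fun p : ℕ × ℕ => q (p.1 + 1, p.2 + 1) * x ^ (p.1 + 1))
    (n := fun p => p.2 + 1) hyb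
    ((summable_genFunDy_terms (q := fun p => |q p|) (x := |x|) (by simpa using hq)
      (by simpa using hx) hb).congr fun p => by
      simp only [abs_mul, abs_pow, Nat.cast_add, Nat.cast_one, Nat.add_sub_cancel]; ring)
    ((summable_genFun_terms hq hx hy).congr fun p => by ring)
  convert key using 1
  · funext t
    exact tsum_congr fun p => by ring
  · refine tsum_congr fun p => ?_
    simp only [Nat.cast_add, Nat.cast_one, Nat.add_sub_cancel]
    ring

theorem hasSum_genFun_euler (hq : ∀ p, |q p| ≤ 1) (hx : |x| < 1) (hy : |y| < 1) :
    HasSum (fun p : ℕ × ℕ => ((p.1 : ℝ) + p.2 + 1) * q (p.1 + 1, p.2 + 1) * x ^ (p.1 + 1) *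
      y ^ (p.2 + 1)) (x * genFunDx q x y + y * genFunDy q x y - genFun q x y) :=
  ((((summable_genFunDx_terms hq hx hy).hasSum.mul_left x).add
    ((summable_genFunDy_terms hq hx hy).hasSum.mul_left y)).sub
    (summable_genFun_terms hq hx hy).hasSum).congr_fun fun p => by ring

theorem hasSum_succ_mul_pow_succ {c : ℕ → ℝ} (hc : ∀ n, |c n| ≤ 1) (hx : |x| < 1) :
    HasSum (fun n : ℕ => ((n : ℝ) + 1) * c (n + 1) * x ^ (n + 1)) (∑' n : ℕ, n * c n * x ^ n) := by
  have hs : Summable fun n : ℕ => n * c n * x ^ n := by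
    refine (summable_pow_mul_geometric_of_norm_lt_one 1 (by rwa [Real.norm_eq_abs, abs_abs] :
      ‖|x|‖ < 1)).of_norm_bounded fun n => ?_
    rw [Real.norm_eq_abs, abs_mul, abs_mul, abs_pow, Nat.abs_cast, pow_one]
    calc (n : ℝ) * |c n| * |x| ^ n ≤ n * 1 * |x| ^ n := by gcongr; exact hc n
      _ = _ := by ring
  simpa using (hasSum_nat_add_iff' 1).2 hs.hasSum

theorem hasSum_predFst (hq : ∀ p, |q p| ≤ 1) (hx : |x| < 1) (hy : |y| < 1)
    (h₀ : ∀ j, q (0, j) = 1) :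
    HasSum (fun p : ℕ × ℕ => ((p.1 : ℝ) + 1) * q (p.1, p.2 + 1) * x ^ (p.1 + 1) * y ^ (p.2 + 1))
      (x * y * (1 - y)⁻¹ + (x ^ 2 * genFunDx q x y + x * genFun q x y)) :=
  hasSum_of_fst_zero_of_fst_succ
    (((hasSum_geometric_of_abs_lt_one hy).mul_left (x * y)).congr_fun fun j => by
      simp only [h₀]; push_cast; ring)
    ((((summable_genFunDx_terms hq hx hy).hasSum.mul_left (x ^ 2)).add
      ((summable_genFun_terms hq hx hy).hasSum.mul_left x)).congr_fun fun p => by push_cast; ring)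

theorem hasSum_predSnd (hq : ∀ p, |q p| ≤ 1) (hx : |x| < 1) (hy : |y| < 1)
    (h₀ : ∀ i, q (i, 0) = 1) :
    HasSum (fun p : ℕ × ℕ => ((p.2 : ℝ) + 1) * q (p.1 + 1, p.2) * x ^ (p.1 + 1) * y ^ (p.2 + 1))
      (x * y * (1 - x)⁻¹ + (y ^ 2 * genFunDy q x y + y * genFun q x y)) :=
  hasSum_of_snd_zero_of_snd_succ
    (((hasSum_geometric_of_abs_lt_one hx).mul_left (x * y)).congr_fun fun i => by
      simp only [h₀]; push_cast; ring)
    ((((summable_genFunDy_terms hq hx hy).hasSum.mul_left (y ^ 2)).add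
      ((summable_genFun_terms hq hx hy).hasSum.mul_left y)).congr_fun fun p => by push_cast; ring)

theorem hasSum_succSnd (hq : ∀ p, |q p| ≤ 1) (hx : |x| < 1) (hy : |y| < 1) (hy₀ : y ≠ 0) :
    HasSum (fun p : ℕ × ℕ => ((p.1 : ℝ) + p.2 + 2) * q (p.1 + 1, p.2 + 2) * x ^ (p.1 + 1) *
      y ^ (p.2 + 1))
      ((x * genFunDx q x y + y * genFunDy q x y - genFun q x y) / y -
        ∑' i : ℕ, i * q (i, 1) * x ^ i) := by
  have hcol := (hasSum_succ_mul_pow_succ (c := fun i => q (i, 1)) (fun _ => hq _) hx).mul_left y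
  have hrow := (hasSum_snd_succ_of_snd_zero (hasSum_genFun_euler hq hx hy)
    (hcol.congr_fun fun i => by simp only [Nat.cast_zero]; ring)).mul_left y⁻¹
  rw [mul_sub, ← div_eq_inv_mul, ← div_eq_inv_mul, mul_div_cancel_left₀ _ hy₀] at hrow
  exact hrow.congr_fun fun p => by push_cast; field_simp; ring

theorem hasSum_succFst (hq : ∀ p, |q p| ≤ 1) (hx : |x| < 1) (hy : |y| < 1) (hx₀ : x ≠ 0) :
    HasSum (fun p : ℕ × ℕ => ((p.1 : ℝ) + p.2 + 2) * q (p.1 + 2, p.2 + 1) * x ^ (p.1 + 1) *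
      y ^ (p.2 + 1))
      ((x * genFunDx q x y + y * genFunDy q x y - genFun q x y) / x -
        ∑' j : ℕ, j * q (1, j) * y ^ j) := by
  have hcol := (hasSum_succ_mul_pow_succ (c := fun j => q (1, j)) (fun _ => hq _) hy).mul_left x
  have hrow := (hasSum_fst_succ_of_fst_zero (hasSum_genFun_euler hq hx hy)
    (hcol.congr_fun fun j => by simp only [Nat.cast_zero]; ring)).mul_left x⁻¹
  rw [mul_sub, ← div_eq_inv_mul, ← div_eq_inv_mul, mul_div_cancel_left₀ _ hx₀] at hrow
  exact hrow.congr_fun fun p => by push_cast; field_simp; ring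

end GenFun

def DirichletRecurrence (r d : ℝ) (q : ℕ × ℕ → ℝ) : Prop :=
  ∀ i j : ℕ, 1 ≤ i → 1 ≤ j →
    q (i, j)
      = d * i / ((r + d) * ((i : ℝ) + (j : ℝ))) * q (i - 1, j)
        + d * j / ((r + d) * ((i : ℝ) + (j : ℝ))) * q (i, j - 1)
        + r / (2 * (r + d)) * q (i, j + 1)
        + r / (2 * (r + d)) * q (i + 1, j)

namespace DirichletRecurrence

variable {r d : ℝ} {q : ℕ × ℕ → ℝ} {x y : ℝ}

theorem succ_succ (hrec : DirichletRecurrence r d q) (hrd : r + d ≠ 0) (i j : ℕ) :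
    (r + d) * (((i : ℝ) + j + 2) * q (i + 1, j + 1))
      = d * ((i : ℝ) + 1) * q (i, j + 1) + d * ((j : ℝ) + 1) * q (i + 1, j)
        + r / 2 * ((i : ℝ) + j + 2) * (q (i + 1, j + 2) + q (i + 2, j + 1)) := by
  have hij : (i : ℝ) + 1 + (j + 1) ≠ 0 := by positivity
  rw [hrec (i + 1) (j + 1) i.succ_pos j.succ_pos]
  simp only [Nat.add_sub_cancel, Nat.cast_add, Nat.cast_one]
  field_simp
  ring

theorem genFun_identity (hrec : DirichletRecurrence r d q) (hrd : r + d ≠ 0)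
    (hq : ∀ p, |q p| ≤ 1) (h₀₁ : ∀ i, q (i, 0) = 1) (h₀₂ : ∀ j, q (0, j) = 1)
    (hx : |x| < 1) (hy : |y| < 1) (hx₀ : x ≠ 0) (hy₀ : y ≠ 0) :
    (r + d) * (x * genFunDx q x y + y * genFunDy q x y)
      = d * (x * y * (1 - y)⁻¹ + (x ^ 2 * genFunDx q x y + x * genFun q x y))
        + d * (x * y * (1 - x)⁻¹ + (y ^ 2 * genFunDy q x y + y * genFun q x y))
        + r / 2 * ((x * genFunDx q x y + y * genFunDy q x y - genFun q x y) / y -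
            ∑' i : ℕ, i * q (i, 1) * x ^ i)
        + r / 2 * ((x * genFunDx q x y + y * genFunDy q x y - genFun q x y) / x -
            ∑' j : ℕ, j * q (1, j) * y ^ j) := by
  have hlhs := ((((summable_genFunDx_terms hq hx hy).hasSum.mul_left x).add
    ((summable_genFunDy_terms hq hx hy).hasSum.mul_left y)).mul_left (r + d))
  have hrhs := ((((hasSum_predFst hq hx hy h₀₂).mul_left d).add
    ((hasSum_predSnd hq hx hy h₀₁).mul_left d)).add
    ((hasSum_succSnd hq hx hy hy₀).mul_left (r / 2))).add
    ((hasSum_succFst hq hx hy hx₀).mul_left (r / 2))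
  refine hlhs.unique (hrhs.congr_fun fun p => ?_)
  linear_combination (x ^ (p.1 + 1) * y ^ (p.2 + 1)) * hrec.succ_succ hrd p.1 p.2

end DirichletRecurrence

theorem genFun_pde_general (r d : ℝ) (hr : 0 < r) (hd : 0 < d) (q : ℕ × ℕ → ℝ)
    (hq_bdry1 : ∀ i : ℕ, q (i, 0) = 1) (hq_bdry2 : ∀ j : ℕ, q (0, j) = 1)
    (hq_rec : ∀ i j : ℕ, 1 ≤ i → 1 ≤ j →
      q (i, j)
        = d * i / ((r + d) * ((i : ℝ) + (j : ℝ))) * q (i - 1, j)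
          + d * j / ((r + d) * ((i : ℝ) + (j : ℝ))) * q (i, j - 1)
          + r / (2 * (r + d)) * q (i, j + 1)
          + r / (2 * (r + d)) * q (i + 1, j))
    (hq_nonneg : ∀ i j : ℕ, 0 ≤ q (i, j)) (hq_le_one : ∀ i j : ℕ, q (i, j) ≤ 1) :
    ∀ x y : ℝ, x ∈ Set.Ioo (0 : ℝ) 1 → y ∈ Set.Ioo (0 : ℝ) 1 →
      Summable (fun p : ℕ × ℕ => |q (p.1 + 1, p.2 + 1) * x ^ (p.1 + 1) * y ^ (p.2 + 1)|) ∧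
      ∃ Px Py : ℝ,
        HasDerivAt (fun t => genFun q t y) Px x ∧
        HasDerivAt (fun t => genFun q x t) Py y ∧
        Qfun r d x y * Px + Qfun r d y x * Py + Rfun r d x y * genFun q x y
          = -(r / 2) * ((∑' i : ℕ, (i : ℝ) * q (i, 1) * x ^ i)
              + (∑' j : ℕ, (j : ℝ) * q (1, j) * y ^ j))
            + d * x * y * (1 / (1 - x) + 1 / (1 - y)) := by
  rintro x y ⟨hx₀, hx₁⟩ ⟨hy₀, hy₁⟩
  have hq : ∀ p, |q p| ≤ 1 := fun p => abs_le.2 ⟨by linarith [hq_nonneg p.1 p.2], hq_le_one p.1 p.2⟩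
  have hx : |x| < 1 := by rwa [abs_of_pos hx₀]
  have hy : |y| < 1 := by rwa [abs_of_pos hy₀]
  refine ⟨(summable_genFun_terms hq hx hy).abs, _, _, hasDerivAt_genFun_fst hq hx hy,
    hasDerivAt_genFun_snd hq hx hy, ?_⟩
  have key := DirichletRecurrence.genFun_identity hq_rec (by positivity) hq hq_bdry1 hq_bdry2 hx hy
    hx₀.ne' hy₀.ne'
  have h1x : 1 - x ≠ 0 := by linarith
  have h1y : 1 - y ≠ 0 := by linarith
  simp only [Qfun, Rfun]
  field_simp at key ⊢
  linear_combination key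

/-- for a symmetric `[0,1]`-valued solution `q` of the Dirichlet problem,
the double power series `P(x,y) = Σ_{i,j ≥ 1} q(i,j)x^i y^j` converges absolutely on
`(0,1)²` and satisfies there the PDE
`Q(x,y)∂P/∂x + Q(y,x)∂P/∂y + R(x,y)P = −(r/2)(Σ i·q(i,1)x^i + Σ j·q(1,j)y^j)
  + d·x·y·(1/(1−x) + 1/(1−y))`. -/
theorem genFun_pde (r d : ℝ) (hr : 0 < r) (hd : 0 < d) (q : ℕ × ℕ → ℝ)
    (hq_bdry1 : ∀ i : ℕ, q (i, 0) = 1) (hq_bdry2 : ∀ j : ℕ, q (0, j) = 1)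
    (hq_rec : ∀ i j : ℕ, 1 ≤ i → 1 ≤ j →
      q (i, j)
        = d * i / ((r + d) * ((i : ℝ) + (j : ℝ))) * q (i - 1, j)
          + d * j / ((r + d) * ((i : ℝ) + (j : ℝ))) * q (i, j - 1)
          + r / (2 * (r + d)) * q (i, j + 1)
          + r / (2 * (r + d)) * q (i + 1, j))
    (hq_sym : ∀ i j : ℕ, q (i, j) = q (j, i))
    (hq_nonneg : ∀ i j : ℕ, 0 ≤ q (i, j)) (hq_le_one : ∀ i j : ℕ, q (i, j) ≤ 1) :
    ∀ x y : ℝ, x ∈ Set.Ioo (0 : ℝ) 1 → y ∈ Set.Ioo (0 : ℝ) 1 →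
      Summable (fun p : ℕ × ℕ => |q (p.1 + 1, p.2 + 1) * x ^ (p.1 + 1) * y ^ (p.2 + 1)|) ∧
      ∃ Px Py : ℝ,
        HasDerivAt (fun t => genFun q t y) Px x ∧
        HasDerivAt (fun t => genFun q x t) Py y ∧
        Qfun r d x y * Px + Qfun r d y x * Py + Rfun r d x y * genFun q x y
          = -(r / 2) * ((∑' i : ℕ, (i : ℝ) * q (i, 1) * x ^ i)
              + (∑' j : ℕ, (j : ℝ) * q (1, j) * y ^ j))
            + d * x * y * (1 / (1 - x) + 1 / (1 - y)) :=
  genFun_pde_general r d hr hd q hq_bdry1 hq_bdry2 hq_rec hq_nonneg hq_le_one
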